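/- Let 𝔸 be an alphabet of m variables and 𝔹 an alphabet of n variables. If a partition I = (i₁ ≤ i₂ ≤ ⋯ ≤ i_h) is not contained in the (m,n)-hook, i.e. h > m and i_{h−m} > n, then S_I(𝔸−𝔹) = 0. -/

import Mathlib

open PowerSeries MvPolynomial

/-- `Π_{m ∈ M} (1 − m·z)`. -/
noncomputable def prodOneSub {R : Type*} [CommRing R] (M : Multiset R) : PowerSeries R :=
  (M.map fun m => (1 : PowerSeries R) - PowerSeries.C m * PowerSeries.X).prod

/-- The supersymmetric complete function `h_k(𝔸−𝔹)`, the `k`-th coefficient of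
`Π_{b∈𝔹}(1−bz) / Π_{a∈𝔸}(1−az)`. -/
noncomputable def hAB {R : Type*} [CommRing R] (A B : Multiset R) (k : ℕ) : R :=
  PowerSeries.coeff k (prodOneSub B * (prodOneSub A).invOfUnit 1)

/-- `h_k(𝔸−𝔹)` extended by `0` to negative integer indices. -/
noncomputable def hABz {R : Type*} [CommRing R] (A B : Multiset R) (k : ℤ) : R :=
  if k < 0 then 0 else hAB A B k.toNat

/-- The supersymmetric Schur function `S_I(𝔸−𝔹) = det( h_{i_p+p−q}(𝔸−𝔹) )_{1≤p,q≤h}`,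
for a partition `I` with `h` parts (written in weakly increasing order). -/
noncomputable def schurAB {R : Type*} [CommRing R] (A B : Multiset R) {h : ℕ}
    (I : Fin h → ℕ) : R :=
  Matrix.det (Matrix.of fun p q : Fin h =>
    hABz A B ((I p : ℤ) + (p : ℕ) - (q : ℕ)))


/-!
Multiplying the Jacobi–Trudi matrix on the right by the unitriangular Toeplitz matrix built from
the coefficients of `Π_{a∈𝔸}(1−az)` turns the entry `h_{k−q}(𝔸−𝔹)` of column `q` into the
coefficient of `z^{k−q}` in `Π_{b∈𝔹}(1−bz)`, as long as the column has at least `m` entries below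
row `q`; that coefficient vanishes once `k − q > n`. For a partition outside the `(m,n)`-hook this
creates a zero block in the last `m + 1` rows and the first `h − m` columns, and a square matrix of
size `h` with a zero block whose sides add up to `h + 1` is singular.
-/

section PowerSeries

variable {R : Type*} [CommRing R]

lemma prodOneSub_cons (a : R) (M : Multiset R) :
    prodOneSub (a ::ₘ M) = (1 - PowerSeries.C a * PowerSeries.X) * prodOneSub M := by
  simp [prodOneSub]

lemma constantCoeff_prodOneSub (M : Multiset R) : constantCoeff (prodOneSub M) = 1 := by
  simp [prodOneSub, map_multiset_prod]

lemma coeff_prodOneSub_of_card_lt (M : Multiset R) {k : ℕ} (hk : Multiset.card M < k) :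
    coeff k (prodOneSub M) = 0 := by
  induction M using Multiset.induction_on generalizing k with
  | empty => simp [prodOneSub, PowerSeries.coeff_one, Nat.pos_iff_ne_zero.mp hk]
  | cons a M ih =>
    rw [Multiset.card_cons] at hk
    obtain ⟨k, rfl⟩ : ∃ k', k = k' + 1 := ⟨k - 1, by omega⟩
    rw [prodOneSub_cons, sub_mul, one_mul, mul_assoc, map_sub, PowerSeries.coeff_C_mul,
      coeff_succ_X_mul, ih (by omega), ih (by omega), mul_zero, sub_zero]

lemma prodOneSub_mul_hAB_series (A B : Multiset R) :
    prodOneSub A * (prodOneSub B * (prodOneSub A).invOfUnit 1) = prodOneSub B := by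
  rw [mul_left_comm, mul_invOfUnit _ 1 (by simp [constantCoeff_prodOneSub]), mul_one]

/-- Since `coeff j (prodOneSub A) = (-1)^j e_j(𝔸)`, this is the recurrence
`Σ_j (-1)^j e_j(𝔸) h_{k-j}(𝔸−𝔹) = (-1)^k e_k(𝔹)`. -/
lemma sum_coeff_prodOneSub_mul_hABz (A B : Multiset R) (k : ℕ) {N : ℕ}
    (hN : Multiset.card A < N) :
    ∑ j ∈ Finset.range N, coeff j (prodOneSub A) * hABz A B ((k : ℤ) - j) =
      coeff k (prodOneSub B) := by
  set f : ℕ → R := fun j => coeff j (prodOneSub A) * hABz A B ((k : ℤ) - j)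
  have hf : ∀ j ≥ min (Multiset.card A + 1) (k + 1), f j = 0 := by
    intro j hj
    rcases min_le_iff.mp hj with hA | hk
    · simp [f, coeff_prodOneSub_of_card_lt A (k := j) (by omega)]
    · simp only [f, hABz, if_pos (show (k : ℤ) - j < 0 by omega), mul_zero]
  have hsupp := fun n (hn : min (Multiset.card A + 1) (k + 1) ≤ n) =>
    Finset.eventually_constant_sum hf hn
  rw [← prodOneSub_mul_hAB_series A B, PowerSeries.coeff_mul,
    Finset.Nat.sum_antidiagonal_eq_sum_range_succ_mk, hsupp N (by omega), ← hsupp (k + 1) (by omega)]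
  refine Finset.sum_congr rfl fun j hj => ?_
  rw [Finset.mem_range] at hj
  simp only [f, hABz, hAB, if_neg (show ¬((k : ℤ) - j < 0) by omega)]
  congr
  omega

end PowerSeries

namespace Matrix

variable {R : Type*} [CommRing R]

lemma det_eq_zero_of_card_lt_of_forall_mem_eq_zero {n : Type*} [Fintype n] [DecidableEq n]
    (M : Matrix n n R) (s t : Finset n) (hst : Fintype.card n < s.card + t.card)
    (hzero : ∀ i ∈ s, ∀ j ∈ t, M i j = 0) : M.det = 0 := by
  rw [det_apply]
  refine Finset.sum_eq_zero fun σ _ => ?_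
  obtain ⟨i, hi⟩ := Finset.inter_nonempty_of_card_lt_card_add_card (Finset.subset_univ s)
    (Finset.subset_univ (t.map σ.toEmbedding)) (by simpa using hst)
  obtain ⟨his, hit⟩ := Finset.mem_inter.mp hi
  obtain ⟨j, hj, rfl⟩ := Finset.mem_map.mp hit
  exact smul_eq_zero_of_right _ (Finset.prod_eq_zero (Finset.mem_univ j) (hzero (σ j) his j hj))

def lowerToeplitz (a : ℕ → R) (h : ℕ) : Matrix (Fin h) (Fin h) R :=
  of fun r q => if q ≤ r then a (r - q) else 0

lemma det_lowerToeplitz (a : ℕ → R) (h : ℕ) : (lowerToeplitz a h).det = a 0 ^ h := by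
  rw [det_of_isLowerTriangular (lowerToeplitz a h) fun r q hrq => if_neg (not_le.mpr hrq)]
  simp [lowerToeplitz]

end Matrix

section Schur

open Matrix

variable {R : Type*} [CommRing R]

noncomputable def schurABMatrix (A B : Multiset R) {h : ℕ} (I : Fin h → ℕ) :
    Matrix (Fin h) (Fin h) R :=
  of fun p q => hABz A B ((I p : ℤ) + (p : ℕ) - (q : ℕ))

lemma schurABMatrix_mul_lowerToeplitz_apply (A B : Multiset R) {h : ℕ} (I : Fin h → ℕ)
    {p q : Fin h} (hqp : q ≤ p) (hq : (q : ℕ) + Multiset.card A < h) :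
    (schurABMatrix A B I * lowerToeplitz (fun j => coeff j (prodOneSub A)) h) p q =
      coeff (I p + p - q) (prodOneSub B) := by
  set a : ℕ → R := fun j => coeff j (prodOneSub A)
  set k : ℤ := (I p : ℤ) + (p : ℕ)
  have hterm : ∀ r : Fin h, schurABMatrix A B I p r * lowerToeplitz a h r q =
      if (q : ℕ) ≤ r then a (r - q) * hABz A B (k - q - (r - q : ℕ)) else 0 := by
    intro r
    simp only [schurABMatrix, lowerToeplitz, of_apply, Fin.le_def]
    split_ifs with hr
    · rw [mul_comm]; congr 2; omega
    · rw [mul_zero]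
  obtain ⟨N, hN⟩ : ∃ N, h = q + N := ⟨h - q, by omega⟩
  rw [mul_apply, Finset.sum_congr rfl fun r _ => hterm r,
    Fin.sum_univ_eq_sum_range (fun r => if (q : ℕ) ≤ r then
      a (r - q) * hABz A B (k - q - (r - q : ℕ)) else 0), congrArg Finset.range hN,
    Finset.sum_range_add,
    Finset.sum_eq_zero fun r hr => if_neg (by simpa using hr), zero_add]
  simp only [Nat.le_add_right, if_true, Nat.add_sub_cancel_left]
  rw [← sum_coeff_prodOneSub_mul_hABz A B (I p + p - q) (N := N) (by omega)]
  refine Finset.sum_congr rfl fun j _ => ?_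
  congr 3
  simp only [k]
  omega

theorem schurAB_eq_zero_of_not_mem_hook (A B : Multiset R) {m n h : ℕ} (I : Fin h → ℕ)
    (hI : Monotone I) (hA : Multiset.card A ≤ m) (hB : Multiset.card B ≤ n) (hm : m < h)
    (hhook : n < I ⟨h - m - 1, by omega⟩) :
    schurAB A B I = 0 := by
  set U := lowerToeplitz (fun j => coeff j (prodOneSub A)) h
  have hU : U.det = 1 := by simp [U, det_lowerToeplitz, constantCoeff_prodOneSub]
  have hzero : ∀ p ∈ Finset.Ici (⟨h - m - 1, by omega⟩ : Fin h),
      ∀ q ∈ ({q | (q : ℕ) < h - m} : Finset (Fin h)), (schurABMatrix A B I * U) p q = 0 := by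
    intro p hp q hq
    rw [Finset.mem_Ici] at hp
    rw [Finset.mem_filter_univ] at hq
    have hqp : q ≤ p := by rw [Fin.le_def] at hp ⊢; dsimp only at hp; omega
    rw [schurABMatrix_mul_lowerToeplitz_apply A B I hqp (by omega)]
    exact coeff_prodOneSub_of_card_lt B (by have := hI hp; omega)
  have hMU : (schurABMatrix A B I * U).det = 0 :=
    det_eq_zero_of_card_lt_of_forall_mem_eq_zero _ _ _
      (by simp only [Fintype.card_fin, Fin.card_Ici, Fin.card_filter_val_lt]; omega) hzero
  rwa [det_mul, hU, mul_one] at hMU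

end Schur

/-- Vanishing property: if the partition `I = (i₁ ≤ ⋯ ≤ i_h)` is not contained in the
`(m,n)`-hook, i.e. `h > m` and `i_{h−m} > n`, then `S_I(𝔸−𝔹) = 0` for alphabets of
`m` and `n` variables. -/
theorem stmt_11 (m n h : ℕ) (I : Fin h → ℕ) (hI : Monotone I)
    (hm : m < h) (hhook : n < I ⟨h - m - 1, by omega⟩) :
    schurAB
        ((Finset.univ : Finset (Fin m)).val.map
          (fun i => (X (Sum.inl i) : MvPolynomial (Fin m ⊕ Fin n) ℤ)))
        ((Finset.univ : Finset (Fin n)).val.map (fun j => X (Sum.inr j)))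
        I = 0 :=
  schurAB_eq_zero_of_not_mem_hook _ _ I hI (by simp) (by simp) hm hhook
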